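/- Let D be a symmetric monoidal category and F : D → Cat a lax symmetric monoidal functor (with respect to cartesian product of categories). Then the Grothendieck construction D ∫ F carries a symmetric monoidal structure compatible with that of D; moreover, if D is a permutative category (strict monoidal product), then so is D ∫ F. -/

import Mathlib

/-!
The tensor product of `(a, x)` and `(b, y)` is `(a ⊗ b, μ (x, y))` and the unit is
`(𝟙_ D, ε (*))`. Since `Cat` is a 1-category, the coherence axioms of the lax structure on `F`
are equalities of functors; evaluated at objects they say that the associator, unitors and
braiding of `D` transport the fibre tensor products onto each other on the nose. The structure
isomorphisms of `D ∫ F` are therefore those of `D` with `eqToHom` fibre components, and every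
coherence diagram holds on bases because it holds in `D`, and on fibres because the images of
`μ`-composites under these transports are again `μ`-composites up to `eqToHom`s. When the
structure isomorphisms of `D` are identities, so are their lifts.
-/

open CategoryTheory MonoidalCategory

universe v u

noncomputable section

/-- A monoidal structure (taken as an instance) is permutative (strict) if
the associator and the unitors are identities. -/
def IsPermutative (E : Type u) [Category.{v} E] [MonoidalCategory E] : Prop :=
  (∀ X : E, ∃ h : 𝟙_ E ⊗ X = X, (λ_ X).hom = eqToHom h) ∧
  (∀ X : E, ∃ h : X ⊗ 𝟙_ E = X, (ρ_ X).hom = eqToHom h) ∧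
  (∀ X Y Z : E, ∃ h : (X ⊗ Y) ⊗ Z = X ⊗ (Y ⊗ Z), (α_ X Y Z).hom = eqToHom h)

universe v₁ u₁ v₂ u₂

namespace CategoryTheory.Grothendieck

open Functor.LaxMonoidal

attribute [local simp] eqToHom_map

variable {C : Type u₁} [Category.{v₁} C]

section IsoMkEq

variable {F : C ⥤ Cat.{v₂, u₂}}

lemma map_inv_obj_of_map_hom_obj {X Y : Grothendieck F} (e : X.base ≅ Y.base)
    (h : (F.map e.hom).toFunctor.obj X.fiber = Y.fiber) :
    (F.map e.inv).toFunctor.obj Y.fiber = X.fiber := by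
  rw [← h, ← Cat.Hom.comp_obj, ← F.map_comp, e.hom_inv_id, F.map_id, Cat.Hom.id_obj]

/-- Unlike `Grothendieck.isoMk`, this is reducible (as are `tensor`, `tensorMap` and `unit`
below), so that `simp` sees the `eqToHom` fibre components of the structure isomorphisms. -/
@[reducible]
def isoMkEq {X Y : Grothendieck F} (e : X.base ≅ Y.base)
    (h : (F.map e.hom).toFunctor.obj X.fiber = Y.fiber) : X ≅ Y where
  hom := ⟨e.hom, eqToHom h⟩
  inv := ⟨e.inv, eqToHom (map_inv_obj_of_map_hom_obj e h)⟩
  -- Here and below `id_base` and `comp_base` are kept out of the fibre goals: rewriting the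
  -- bases there changes the endpoints of the `eqToHom`s, which then no longer cancel.
  hom_inv_id := ext _ _ (by simp) (by simp [-id_base, -comp_base])
  inv_hom_id := ext _ _ (by simp) (by simp [-id_base, -comp_base])

lemma exists_isoMkEq_hom_eq_eqToHom {X Y : Grothendieck F} (e : X.base ≅ Y.base)
    (h : (F.map e.hom).toFunctor.obj X.fiber = Y.fiber) (hb : X.base = Y.base)
    (he : e.hom = eqToHom hb) : ∃ hXY : X = Y, (isoMkEq e h).hom = eqToHom hXY := by
  obtain ⟨a, x⟩ := X
  obtain ⟨b, y⟩ := Y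
  dsimp only at hb
  subst hb
  rw [eqToHom_refl] at he
  obtain rfl : x = y := by simpa [he] using h
  exact ⟨rfl, ext _ _ (by simp [he]) (by simp only [eqToHom_refl, id_fiber]; exact eqToHom_trans _ _)⟩

end IsoMkEq

section Monoidal

variable [MonoidalCategory C] {F : C ⥤ Cat.{v₂, u₂}} [F.LaxMonoidal]

def fiberTensor {a b : C} (x : F.obj a) (y : F.obj b) : F.obj (a ⊗ b) :=
  (μ F a b).toFunctor.obj (x, y)

def fiberTensorMap {a b : C} {x x' : F.obj a} {y y' : F.obj b} (φ : x ⟶ x') (ψ : y ⟶ y') :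
    fiberTensor x y ⟶ fiberTensor x' y' :=
  (μ F a b).toFunctor.map (X := (x, y)) (Y := (x', y')) (φ, ψ)

variable (F) in
def fiberUnit : F.obj (𝟙_ C) := (ε F).toFunctor.obj ⟨⟨⟨⟩⟩⟩

@[simp]
lemma fiberTensorMap_id {a b : C} (x : F.obj a) (y : F.obj b) :
    fiberTensorMap (𝟙 x) (𝟙 y) = 𝟙 (fiberTensor x y) :=
  (μ F a b).toFunctor.map_id (x, y)

@[simp]
lemma fiberTensorMap_comp_fiberTensorMap {a b : C} {x x' x'' : F.obj a} {y y' y'' : F.obj b}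
    (φ : x ⟶ x') (φ' : x' ⟶ x'') (ψ : y ⟶ y') (ψ' : y' ⟶ y'') :
    fiberTensorMap φ ψ ≫ fiberTensorMap φ' ψ' = fiberTensorMap (φ ≫ φ') (ψ ≫ ψ') :=
  ((μ F a b).toFunctor.map_comp (X := (x, y)) (Y := (x', y')) (Z := (x'', y''))
    (φ, ψ) (φ', ψ')).symm

@[simp]
lemma fiberTensorMap_eqToHom_comp_left {a b : C} {x₀ x x' : F.obj a} {y y' : F.obj b}
    (h : x₀ = x) (φ : x ⟶ x') (ψ : y ⟶ y') :
    fiberTensorMap (eqToHom h ≫ φ) ψ = eqToHom (by rw [h]) ≫ fiberTensorMap φ ψ := by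
  subst h; simp

@[simp]
lemma fiberTensorMap_eqToHom_comp_right {a b : C} {x x' : F.obj a} {y₀ y y' : F.obj b}
    (h : y₀ = y) (φ : x ⟶ x') (ψ : y ⟶ y') :
    fiberTensorMap φ (eqToHom h ≫ ψ) = eqToHom (by rw [h]) ≫ fiberTensorMap φ ψ := by
  subst h; simp

@[simp]
lemma fiberTensorMap_eqToHom_left {a b : C} {x₀ x : F.obj a} {y y' : F.obj b}
    (h : x₀ = x) (ψ : y ⟶ y') :
    fiberTensorMap (eqToHom h) ψ = eqToHom (by rw [h]) ≫ fiberTensorMap (𝟙 x) ψ := by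
  subst h; simp

@[simp]
lemma fiberTensorMap_eqToHom_right {a b : C} {x x' : F.obj a} {y₀ y : F.obj b}
    (φ : x ⟶ x') (h : y₀ = y) :
    fiberTensorMap φ (eqToHom h) = eqToHom (by rw [h]) ≫ fiberTensorMap φ (𝟙 y) := by
  subst h; simp

lemma map_fiberTensor {a a' b b' : C} (f : a ⟶ a') (g : b ⟶ b') (x : F.obj a) (y : F.obj b) :
    (F.map (f ⊗ₘ g)).toFunctor.obj (fiberTensor x y) =
      fiberTensor ((F.map f).toFunctor.obj x) ((F.map g).toFunctor.obj y) :=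
  (Functor.congr_obj (congrArg Cat.Hom.toFunctor (μ_natural F f g)) (x, y)).symm

@[simp]
lemma map_fiberTensorMap {a a' b b' : C} (f : a ⟶ a') (g : b ⟶ b')
    {x x' : F.obj a} {y y' : F.obj b} (φ : x ⟶ x') (ψ : y ⟶ y') :
    (F.map (f ⊗ₘ g)).toFunctor.map (fiberTensorMap φ ψ) =
      eqToHom (map_fiberTensor f g x y) ≫
        fiberTensorMap ((F.map f).toFunctor.map φ) ((F.map g).toFunctor.map ψ) ≫
          eqToHom (map_fiberTensor f g x' y').symm :=
  Functor.congr_hom (congrArg Cat.Hom.toFunctor (μ_natural F f g).symm)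
    (X := (x, y)) (Y := (x', y')) (φ, ψ)

lemma map_associator_fiberTensor {a b c : C} (x : F.obj a) (y : F.obj b) (z : F.obj c) :
    (F.map (α_ a b c).hom).toFunctor.obj (fiberTensor (fiberTensor x y) z) =
      fiberTensor x (fiberTensor y z) :=
  Functor.congr_obj (congrArg Cat.Hom.toFunctor (associativity F a b c)) ((x, y), z)

@[simp]
lemma map_associator_fiberTensorMap {a b c : C} {x x' : F.obj a} {y y' : F.obj b}
    {z z' : F.obj c} (φ : x ⟶ x') (ψ : y ⟶ y') (χ : z ⟶ z') :
    (F.map (α_ a b c).hom).toFunctor.map (fiberTensorMap (fiberTensorMap φ ψ) χ) =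
      eqToHom (map_associator_fiberTensor x y z) ≫ fiberTensorMap φ (fiberTensorMap ψ χ) ≫
        eqToHom (map_associator_fiberTensor x' y' z').symm :=
  Functor.congr_hom (congrArg Cat.Hom.toFunctor (associativity F a b c))
    (X := ((x, y), z)) (Y := ((x', y'), z')) ((φ, ψ), χ)

lemma map_leftUnitor_fiberTensor {a : C} (x : F.obj a) :
    (F.map (λ_ a).hom).toFunctor.obj (fiberTensor (fiberUnit F) x) = x :=
  (Functor.congr_obj (congrArg Cat.Hom.toFunctor (left_unitality F a))
    ((⟨⟨⟨⟩⟩⟩, x) : (𝟙_ Cat ⊗ F.obj a : Cat))).symm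

@[simp]
lemma map_leftUnitor_fiberTensorMap {a : C} {x x' : F.obj a} (φ : x ⟶ x') :
    (F.map (λ_ a).hom).toFunctor.map (fiberTensorMap (𝟙 (fiberUnit F)) φ) =
      eqToHom (map_leftUnitor_fiberTensor x) ≫ φ ≫
        eqToHom (map_leftUnitor_fiberTensor x').symm := by
  -- `left_unitality` sees `𝟙 (fiberUnit F)` as the image under `ε` of the identity of the point
  rw [← show (ε F).toFunctor.map (𝟙 _) = 𝟙 (fiberUnit F) from
    (ε F).toFunctor.map_id _]
  exact Functor.congr_hom (congrArg Cat.Hom.toFunctor (left_unitality F a).symm)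
    (X := ((⟨⟨⟨⟩⟩⟩, x) : (𝟙_ Cat ⊗ F.obj a : Cat))) (Y := (⟨⟨⟨⟩⟩⟩, x')) (𝟙 _, φ)

lemma map_rightUnitor_fiberTensor {a : C} (x : F.obj a) :
    (F.map (ρ_ a).hom).toFunctor.obj (fiberTensor x (fiberUnit F)) = x :=
  (Functor.congr_obj (congrArg Cat.Hom.toFunctor (right_unitality F a))
    ((x, ⟨⟨⟨⟩⟩⟩) : (F.obj a ⊗ 𝟙_ Cat : Cat))).symm

@[simp]
lemma map_rightUnitor_fiberTensorMap {a : C} {x x' : F.obj a} (φ : x ⟶ x') :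
    (F.map (ρ_ a).hom).toFunctor.map (fiberTensorMap φ (𝟙 (fiberUnit F))) =
      eqToHom (map_rightUnitor_fiberTensor x) ≫ φ ≫
        eqToHom (map_rightUnitor_fiberTensor x').symm := by
  rw [← show (ε F).toFunctor.map (𝟙 _) = 𝟙 (fiberUnit F) from
    (ε F).toFunctor.map_id _]
  exact Functor.congr_hom (congrArg Cat.Hom.toFunctor (right_unitality F a).symm)
    (X := ((x, ⟨⟨⟨⟩⟩⟩) : (F.obj a ⊗ 𝟙_ Cat : Cat))) (Y := (x', ⟨⟨⟨⟩⟩⟩)) (φ, 𝟙 _)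

@[reducible]
def tensor (X Y : Grothendieck F) : Grothendieck F :=
  ⟨X.base ⊗ Y.base, fiberTensor X.fiber Y.fiber⟩

@[reducible]
def tensorMap {X X' Y Y' : Grothendieck F} (f : X ⟶ X') (g : Y ⟶ Y') :
    tensor X Y ⟶ tensor X' Y' :=
  ⟨f.base ⊗ₘ g.base, eqToHom (map_fiberTensor _ _ _ _) ≫ fiberTensorMap f.fiber g.fiber⟩

variable (F) in
@[reducible]
def unit : Grothendieck F := ⟨𝟙_ C, fiberUnit F⟩

instance : MonoidalCategoryStruct (Grothendieck F) where
  tensorObj := tensor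
  tensorHom := tensorMap
  whiskerLeft X _ _ g := tensorMap (𝟙 X) g
  whiskerRight f Y := tensorMap f (𝟙 Y)
  tensorUnit := unit F
  associator X Y Z := isoMkEq (α_ X.base Y.base Z.base) (map_associator_fiberTensor _ _ _)
  leftUnitor X := isoMkEq (λ_ X.base) (map_leftUnitor_fiberTensor _)
  rightUnitor X := isoMkEq (ρ_ X.base) (map_rightUnitor_fiberTensor _)

@[simp] lemma tensorObj_eq (X Y : Grothendieck F) : X ⊗ Y = tensor X Y := rfl
@[simp] lemma tensorHom_eq {X X' Y Y' : Grothendieck F} (f : X ⟶ X') (g : Y ⟶ Y') :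
    f ⊗ₘ g = tensorMap f g := rfl
@[simp] lemma whiskerLeft_eq (X : Grothendieck F) {Y Y' : Grothendieck F} (g : Y ⟶ Y') :
    X ◁ g = tensorMap (𝟙 X) g := rfl
@[simp] lemma whiskerRight_eq {X X' : Grothendieck F} (f : X ⟶ X') (Y : Grothendieck F) :
    f ▷ Y = tensorMap f (𝟙 Y) := rfl
@[simp] lemma tensorUnit_eq : 𝟙_ (Grothendieck F) = unit F := rfl
@[simp] lemma associator_eq (X Y Z : Grothendieck F) :
    α_ X Y Z = isoMkEq (α_ X.base Y.base Z.base) (map_associator_fiberTensor _ _ _) := rfl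
@[simp] lemma leftUnitor_eq (X : Grothendieck F) :
    λ_ X = isoMkEq (λ_ X.base) (map_leftUnitor_fiberTensor _) := rfl
@[simp] lemma rightUnitor_eq (X : Grothendieck F) :
    ρ_ X = isoMkEq (ρ_ X.base) (map_rightUnitor_fiberTensor _) := rfl

instance : MonoidalCategory (Grothendieck F) := .ofTensorHom
  (id_tensorHom_id := fun _ _ => ext _ _ (by simp) (by simp [-id_base, -comp_base]))
  (tensorHom_comp_tensorHom := fun _ _ _ _ =>
    ext _ _ (by simp) (by simp [-id_base, -comp_base]))
  (associator_naturality := fun _ _ _ => ext _ _ (by simp) (by simp [-id_base, -comp_base]))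
  (leftUnitor_naturality := fun _ => ext _ _ (by simp) (by simp [-id_base, -comp_base]))
  (rightUnitor_naturality := fun _ => ext _ _ (by simp) (by simp [-id_base, -comp_base]))
  (pentagon := fun _ _ _ _ => ext _ _ (by simp) (by simp [-id_base, -comp_base]))
  (triangle := fun _ _ => ext _ _ (by simp) (by simp [-id_base, -comp_base]))

lemma isPermutative (hC : IsPermutative C) : IsPermutative (Grothendieck F) := by
  obtain ⟨hleft, hright, hassoc⟩ := hC
  refine ⟨fun X => ?_, fun X => ?_, fun X Y Z => ?_⟩
  · obtain ⟨h, he⟩ := hleft X.base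
    exact exists_isoMkEq_hom_eq_eqToHom _ _ h he
  · obtain ⟨h, he⟩ := hright X.base
    exact exists_isoMkEq_hom_eq_eqToHom _ _ h he
  · obtain ⟨h, he⟩ := hassoc X.base Y.base Z.base
    exact exists_isoMkEq_hom_eq_eqToHom _ _ h he

end Monoidal

section Braided

variable [MonoidalCategory C] [BraidedCategory C] {F : C ⥤ Cat.{v₂, u₂}} [F.LaxBraided]

lemma map_braiding_fiberTensor {a b : C} (x : F.obj a) (y : F.obj b) :
    (F.map (β_ a b).hom).toFunctor.obj (fiberTensor x y) = fiberTensor y x :=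
  Functor.congr_obj (congrArg Cat.Hom.toFunctor (Functor.LaxBraided.braided (F := F) a b))
    (x, y)

@[simp]
lemma map_braiding_fiberTensorMap {a b : C} {x x' : F.obj a} {y y' : F.obj b}
    (φ : x ⟶ x') (ψ : y ⟶ y') :
    (F.map (β_ a b).hom).toFunctor.map (fiberTensorMap φ ψ) =
      eqToHom (map_braiding_fiberTensor x y) ≫ fiberTensorMap ψ φ ≫
        eqToHom (map_braiding_fiberTensor x' y').symm :=
  Functor.congr_hom (congrArg Cat.Hom.toFunctor (Functor.LaxBraided.braided (F := F) a b))
    (X := (x, y)) (Y := (x', y')) (φ, ψ)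

instance : BraidedCategory (Grothendieck F) where
  braiding X Y := isoMkEq (β_ X.base Y.base) (map_braiding_fiberTensor _ _)
  braiding_naturality_right _ _ _ _ := ext _ _ (by simp) (by simp [-id_base, -comp_base])
  braiding_naturality_left _ _ := ext _ _ (by simp) (by simp [-id_base, -comp_base])
  hexagon_forward _ _ _ := ext _ _ (by simp) (by simp [-id_base, -comp_base])
  hexagon_reverse _ _ _ := ext _ _ (by simp) (by simp [-id_base, -comp_base])

@[simp] lemma braiding_eq (X Y : Grothendieck F) :
    β_ X Y = isoMkEq (β_ X.base Y.base) (map_braiding_fiberTensor _ _) := rfl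

end Braided

instance [MonoidalCategory C] [SymmetricCategory C] {F : C ⥤ Cat.{v₂, u₂}} [F.LaxBraided] :
    SymmetricCategory (Grothendieck F) where
  symmetry _ _ := ext _ _ (by simp) (by simp [-id_base, -comp_base])

end CategoryTheory.Grothendieck

/-- Let `D` be a symmetric monoidal category and `F : D ⥤ Cat` a lax symmetric
(braided) monoidal functor, with respect to the cartesian monoidal structure on
`Cat`.  Then the Grothendieck construction `D ∫ F` carries a symmetric monoidal
structure compatible with that of `D` (the projection to `D` preserves the
tensor product and unit); moreover, if `D` is permutative then so is `D ∫ F`. -/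
theorem stmt8 {D : Type u} [Category.{v} D] [MonoidalCategory D] [SymmetricCategory D]
    (F : LaxBraidedFunctor D Cat.{v, u}) :
    ∃ (M : MonoidalCategory (Grothendieck F.toFunctor))
      (_ : @SymmetricCategory (Grothendieck F.toFunctor) _ M),
      (∀ X Y : Grothendieck F.toFunctor,
        (@MonoidalCategoryStruct.tensorObj _ _ M.toMonoidalCategoryStruct X Y).base =
          X.base ⊗ Y.base) ∧
      ((@MonoidalCategoryStruct.tensorUnit _ _ M.toMonoidalCategoryStruct).base = 𝟙_ D) ∧
      (IsPermutative D → @IsPermutative (Grothendieck F.toFunctor) _ M) :=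
  ⟨inferInstance, inferInstance, fun _ _ => rfl, rfl, Grothendieck.isPermutative⟩
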